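/- arXiv:1703.04484 — 3 statements merged into one kernel-verified Lean document; each statement's English description precedes it below -/
import Mathlib

section
/- Let T be a triangulated category, S ⊆ T a triangulated subcategory, and let A, C ⊆ S and X, Z ⊆ T be full subcategories with add(A) = A and add(C) = C. Assume that for any object s ∈ S, any morphism s → x with x ∈ X factors through an object of A, and any morphism s → z with z ∈ Z factors through an object of C. Then any morphism f : s → y with s ∈ S and y ∈ X ⋆ Z factors as s → b → y with b ∈ A ⋆ C. -/
open CategoryTheory CategoryTheory.Limits CategoryTheory.Pretriangulated

universe w v u

namespace Paper

variable (C : Type u) [Category.{v} C] [HasZeroObject C] [Preadditive C] [HasShift C ℤ]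
  [∀ n : ℤ, (CategoryTheory.shiftFunctor C n).Additive] [Pretriangulated C]

/-- `A ⋆ B`: the full subcategory of objects `y` admitting a distinguished triangle
`x ⟶ y ⟶ z ⟶ x⟦1⟧` with `x ∈ A` and `z ∈ B`. -/
def star (A B : Set C) : Set C :=
  {y | ∃ (x z : C) (f : x ⟶ y) (g : y ⟶ z) (h : z ⟶ x⟦(1 : ℤ)⟧),
    x ∈ A ∧ z ∈ B ∧ Triangle.mk f g h ∈ distTriang C}

/-- `Add A`: all objects isomorphic to a (set-indexed) coproduct of objects of `A`. -/
def AddCl (A : Set C) : Set C :=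
  {y | ∃ (ι : Type w) (f : ι → C) (c : Cofan f),
    (∀ i, f i ∈ A) ∧ Nonempty (IsColimit c) ∧ Nonempty (y ≅ c.pt)}

/-- `add A`: all objects isomorphic to a finite coproduct of objects of `A`. -/
def addCl (A : Set C) : Set C :=
  {y | ∃ (ι : Type) (_ : Finite ι) (f : ι → C) (c : Cofan f),
    (∀ i, f i ∈ A) ∧ Nonempty (IsColimit c) ∧ Nonempty (y ≅ c.pt)}

/-- `Coprod_n(A)` for `n ≥ 1` (the value at `0` is a junk value `∅`):
`Coprod_1(A) = Add(A)` and `Coprod_{n+1}(A) = Add(A) ⋆ Coprod_n(A)`. -/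
def CoprodN (A : Set C) : ℕ → Set C
  | 0 => ∅
  | 1 => AddCl.{w} C A
  | (n+2) => star C (AddCl.{w} C A) (CoprodN A (n+1))

/-- `COprod_n(A)` for `n ≥ 1` (the value at `0` is a junk value `∅`):
`COprod_1(A) = add(A)` and `COprod_{n+1}(A) = add(A) ⋆ COprod_n(A)`. -/
def COprodN (A : Set C) : ℕ → Set C
  | 0 => ∅
  | 1 => addCl C A
  | (n+2) => star C (addCl C A) (COprodN A (n+1))

/-- `Smr A`: direct summands of objects of `A`. -/
def Smr (A : Set C) : Set C :=
  {x | ∃ b ∈ A, ∃ (i : x ⟶ b) (r : b ⟶ x), i ≫ r = 𝟙 x}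

/-- The shift `A⟦k⟧` of a collection of objects. -/
def shiftSet (A : Set C) (k : ℤ) : Set C := {y | ∃ a ∈ A, Nonempty (y ≅ a⟦k⟧)}

/-- `A[m,n] = ⋃_{i=-n}^{-m} A⟦i⟧`. -/
def shiftRange (A : Set C) (m n : ℤ) : Set C :=
  {y | ∃ i : ℤ, -n ≤ i ∧ i ≤ -m ∧ y ∈ shiftSet C A i}

/-- `A[m,∞) = ⋃_{i ≤ -m} A⟦i⟧`. -/
def shiftRangeGE (A : Set C) (m : ℤ) : Set C :=
  {y | ∃ i : ℤ, i ≤ -m ∧ y ∈ shiftSet C A i}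

/-- `A(-∞,∞) = ⋃_{i ∈ ℤ} A⟦i⟧`. -/
def shiftAll (A : Set C) : Set C := {y | ∃ i : ℤ, y ∈ shiftSet C A i}

/-- `s` is a compact object: the canonical map `⊕ᵢ Hom(s, f i) → Hom(s, ∐ f)`
is bijective for every set-indexed family `f`. -/
def IsCompactObj [HasCoproducts.{v} C] (s : C) : Prop :=
  ∀ (ι : Type v) [DecidableEq ι] (f : ι → C),
    Function.Bijective (DFinsupp.sumAddHom
      (fun i => AddMonoidHom.mk' (fun g : s ⟶ f i => g ≫ Sigma.ι f i)
        (fun g g' => Preadditive.add_comp _ _ _ g g' _)) :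
      (Π₀ i : ι, (s ⟶ f i)) → (s ⟶ ∐ f))

/-- A (full) triangulated subcategory, described by its class of objects: it contains `0`,
is closed under isomorphisms, shifts, and extensions (two-out-of-three in triangles). -/
structure IsTriangulatedSub (S : Set C) : Prop where
  zero : ∃ z : C, IsZero z ∧ z ∈ S
  iso : ∀ {x y : C}, (x ≅ y) → x ∈ S → y ∈ S
  shift : ∀ x ∈ S, ∀ i : ℤ, x⟦i⟧ ∈ S
  ext : ∀ T ∈ distTriang C, T.obj₁ ∈ S → T.obj₃ ∈ S → T.obj₂ ∈ S

/-!
Factor `f ≫ g : s ⟶ z` as `s ⟶ c ⟶ z` with `c ∈ Cc`, and complete `u : s ⟶ c` to a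
distinguished triangle `d ⟶ s ⟶ c ⟶ d⟦1⟧`, so that `d ∈ S`. The induced map `d ⟶ x` factors
through some `a ∈ A`; the cone `b` of `c ⟶ d⟦1⟧ ⟶ a⟦1⟧` lies in `A ⋆ Cc`, and the triangle
axioms give `t : s ⟶ b` and `γ : b ⟶ y` with `t ≫ γ ≫ g = f ≫ g`. Hence `f - t ≫ γ` factors
through `x`, and then through some `a' ∈ A`, so `f` factors through `a' ⨯ b`. Finally `A ⋆ Cc`
is closed under finite products, because products of distinguished triangles are distinguished
and `A`, `Cc` are closed under finite biproducts; and `a' ∈ A ⋆ Cc` via `a' = a' ⟶ 0`.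
-/

variable {C}

open ZeroObject

section AddClosed

variable {A : Set C}

lemma mem_of_iso_biproduct (hA : addCl C A = A) {J : Type} [Finite J] {f : J → C}
    (hf : ∀ j, f j ∈ A) {x : C} (e : x ≅ ⨁ f) : x ∈ A :=
  hA ▸ ⟨J, inferInstance, f, (biproduct.bicone f).toCocone, hf, ⟨biproduct.isColimit f⟩, ⟨e⟩⟩

lemma pi_mem_of_addCl_eq (hA : addCl C A = A) {J : Type} [Finite J] (f : J → C)
    (hf : ∀ j, f j ∈ A) : ∏ᶜ f ∈ A :=
  mem_of_iso_biproduct hA hf (biproduct.isoProduct f).symm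

lemma zero_mem_of_addCl_eq (hA : addCl C A = A) : (0 : C) ∈ A :=
  mem_of_iso_biproduct hA (f := PEmpty.elim) PEmpty.rec <| (isZero_zero C).iso <|
    (IsZero.iff_id_eq_zero _).2 (biproduct.hom_ext _ _ PEmpty.rec)

end AddClosed

lemma mem_star_left_of_zero_mem {A B : Set C} (hB : (0 : C) ∈ B) {a : C} (ha : a ∈ A) :
    a ∈ star C A B :=
  ⟨a, 0, 𝟙 a, 0, 0, ha, hB, contractible_distinguished a⟩

lemma pi_mem_star {A B : Set C} (hA : addCl C A = A) (hB : addCl C B = B) {J : Type} [Finite J]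
    (y : J → C) (hy : ∀ j, y j ∈ star C A B) : ∏ᶜ y ∈ star C A B := by
  choose x z f g h hx hz hT using hy
  exact ⟨_, _, _, _, _, pi_mem_of_addCl_eq hA x hx, pi_mem_of_addCl_eq hB z hz,
    productTriangle_distinguished (fun j => Triangle.mk (f j) (g j) (h j)) hT⟩

lemma prod_mem_star {A B : Set C} (hA : addCl C A = A) (hB : addCl C B = B) {y₁ y₂ : C}
    (h₁ : y₁ ∈ star C A B) (h₂ : y₂ ∈ star C A B) : (y₁ ⨯ y₂ : C) ∈ star C A B :=
  pi_mem_star hA hB (pairFunction y₁ y₂) (fun j => by cases j <;> assumption)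

lemma IsTriangulatedSub.obj₁_mem {S : Set C} (hS : IsTriangulatedSub C S) {T : Triangle C}
    (hT : T ∈ distTriang C) (h₂ : T.obj₂ ∈ S) (h₃ : T.obj₃ ∈ S) : T.obj₁ ∈ S :=
  hS.ext _ (inv_rot_of_distTriang _ hT) (hS.shift _ h₃ (-1)) h₂

def HomsFactorThrough (S X A : Set C) : Prop :=
  ∀ (s x : C), s ∈ S → x ∈ X → ∀ g : s ⟶ x, ∃ a ∈ A, ∃ (u : s ⟶ a) (v : a ⟶ x), u ≫ v = g

lemma exists_mem_star_factorization_comp {S A Cc X Z : Set C} (hS : IsTriangulatedSub C S)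
    (hCS : Cc ⊆ S) (hfacX : HomsFactorThrough S X A) (hfacZ : HomsFactorThrough S Z Cc)
    {s x y z : C} (hs : s ∈ S) (hx : x ∈ X) (hz : z ∈ Z) {i : x ⟶ y} {g : y ⟶ z}
    {δ : z ⟶ x⟦(1 : ℤ)⟧} (hT : Triangle.mk i g δ ∈ distTriang C) (f : s ⟶ y) :
    ∃ b ∈ star C A Cc, ∃ (t : s ⟶ b) (γ : b ⟶ y), t ≫ γ ≫ g = f ≫ g := by
  obtain ⟨c, hc, u, v, huv⟩ := hfacZ s z hs hz (f ≫ g)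
  obtain ⟨d, m, n, hd⟩ := distinguished_cocone_triangle₁ u
  obtain ⟨w, -, hw⟩ : ∃ w : d ⟶ x, m ≫ f = w ≫ i ∧ n ≫ w⟦(1 : ℤ)⟧' = v ≫ δ :=
    complete_distinguished_triangle_morphism₁ _ _ hd hT f v huv
  obtain ⟨a, ha, e, j, rfl⟩ := hfacX d x (hS.obj₁_mem hd hs (hCS hc)) hx w
  obtain ⟨b, α, β, hb⟩ := distinguished_cocone_triangle₂ (n ≫ e⟦(1 : ℤ)⟧')
  have hun : u ≫ n = 0 := comp_distTriang_mor_zero₂₃ _ hd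
  obtain ⟨t, ht⟩ : ∃ t : s ⟶ b, u = t ≫ β :=
    Triangle.coyoneda_exact₃ _ hb u (show u ≫ n ≫ e⟦(1 : ℤ)⟧' = 0 by
      rw [reassoc_of% hun, zero_comp])
  obtain ⟨γ, -, hγ⟩ : ∃ γ : b ⟶ y, α ≫ γ = j ≫ i ∧ β ≫ v = γ ≫ g :=
    complete_distinguished_triangle_morphism₂ _ _ hb hT j v
    (show (n ≫ e⟦(1 : ℤ)⟧') ≫ j⟦(1 : ℤ)⟧' = v ≫ δ by
      rw [Category.assoc, ← Functor.map_comp, hw])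
  refine ⟨b, ⟨a, c, α, β, _, ha, hc, hb⟩, t, γ, ?_⟩
  rw [← huv, ht, Category.assoc, hγ]

theorem stmt2_general (S A Cc X Z : Set C) (hS : IsTriangulatedSub C S)
    (hCS : Cc ⊆ S)
    (hA : addCl C A = A) (hC : addCl C Cc = Cc)
    (hfacX : ∀ (s x : C), s ∈ S → x ∈ X → ∀ g : s ⟶ x,
      ∃ a ∈ A, ∃ (u : s ⟶ a) (v : a ⟶ x), u ≫ v = g)
    (hfacZ : ∀ (s z : C), s ∈ S → z ∈ Z → ∀ g : s ⟶ z,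
      ∃ c ∈ Cc, ∃ (u : s ⟶ c) (v : c ⟶ z), u ≫ v = g) :
    ∀ (s y : C), s ∈ S → y ∈ star C X Z → ∀ f : s ⟶ y,
      ∃ b ∈ star C A Cc, ∃ (u : s ⟶ b) (v : b ⟶ y), u ≫ v = f := by
  rintro s y hs ⟨x, z, i, g, δ, hx, hz, hT⟩ f
  obtain ⟨b, hb, t, γ, htγ⟩ :=
    exists_mem_star_factorization_comp hS hCS hfacX hfacZ hs hx hz hT f
  obtain ⟨h, hh⟩ : ∃ h : s ⟶ x, f - t ≫ γ = h ≫ i :=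
    Triangle.coyoneda_exact₂ _ hT (f - t ≫ γ) (show (f - t ≫ γ) ≫ g = 0 by
      rw [Preadditive.sub_comp, Category.assoc, htγ, sub_self])
  obtain ⟨a, ha, u, v, rfl⟩ := hfacX s x hs hx h
  have hab : (a ⨯ b : C) ∈ star C A Cc :=
    prod_mem_star hA hC (mem_star_left_of_zero_mem (zero_mem_of_addCl_eq hC) ha) hb
  refine ⟨a ⨯ b, hab, prod.lift u t, prod.fst ≫ v ≫ i + prod.snd ≫ γ, ?_⟩
  simp only [Preadditive.comp_add, prod.lift_fst_assoc, prod.lift_snd_assoc]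
  rw [← Category.assoc, ← hh, sub_add_cancel]

/-- Lemma 1.9. Let `S ⊆ C` be a triangulated subcategory, and
`A, Cc ⊆ S`, `X, Z ⊆ C` full subcategories with `add(A) = A` and `add(Cc) = Cc`.
If every morphism from an object of `S` to an object of `X` (resp. `Z`) factors
through an object of `A` (resp. `Cc`), then every morphism `f : s ⟶ y` with
`s ∈ S` and `y ∈ X ⋆ Z` factors as `s ⟶ b ⟶ y` with `b ∈ A ⋆ Cc`. -/
theorem stmt2 (S A Cc X Z : Set C) (hS : IsTriangulatedSub C S)
    (hAS : A ⊆ S) (hCS : Cc ⊆ S)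
    (hA : addCl C A = A) (hC : addCl C Cc = Cc)
    (hfacX : ∀ (s x : C), s ∈ S → x ∈ X → ∀ g : s ⟶ x,
      ∃ a ∈ A, ∃ (u : s ⟶ a) (v : a ⟶ x), u ≫ v = g)
    (hfacZ : ∀ (s z : C), s ∈ S → z ∈ Z → ∀ g : s ⟶ z,
      ∃ c ∈ Cc, ∃ (u : s ⟶ c) (v : c ⟶ z), u ≫ v = g) :
    ∀ (s y : C), s ∈ S → y ∈ star C X Z → ∀ f : s ⟶ y,
      ∃ b ∈ star C A Cc, ∃ (u : s ⟶ b) (v : b ⟶ y), u ≫ v = f :=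
  stmt2_general S A Cc X Z hS hCS hA hC hfacX hfacZ

end Paper
end

section
/- Let T be a triangulated category with coproducts and B ⊆ T^c a subcategory of compact objects. Then any compact object of Coprod_n(B) is a direct summand of an object of COprod_n(B). -/
open CategoryTheory CategoryTheory.Limits CategoryTheory.Pretriangulated

universe w v u

namespace Paper

variable (C : Type u) [Category.{v} C] [HasZeroObject C] [Preadditive C] [HasShift C ℤ]
  [∀ n : ℤ, (CategoryTheory.shiftFunctor C n).Additive] [Pretriangulated C]

set_option linter.unusedSectionVars false
set_option maxHeartbeats 1000000

section Lemmas

variable {C} [HasCoproducts.{v} C]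

section Compact

variable {s t : C}

private noncomputable def Phi {ι : Type v} [DecidableEq ι] (f : ι → C) (s : C) :
    (Π₀ i : ι, (s ⟶ f i)) →+ (s ⟶ ∐ f) :=
  DFinsupp.sumAddHom
    (fun i => AddMonoidHom.mk' (fun g : s ⟶ f i => g ≫ Sigma.ι f i)
      (fun g g' => Preadditive.add_comp _ _ _ g g' _))

private lemma isCompactObj_iff :
    IsCompactObj C s ↔ ∀ (ι : Type v) [DecidableEq ι] (f : ι → C),
      Function.Bijective (Phi f s) := Iff.rfl

/-- extend a sum over a subset -/
lemma sum_comp_ι_subset {ι : Type v} (f : ι → C) {S T : Finset ι} (hST : S ⊆ T)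
    (d : ∀ i, s ⟶ f i) [DecidablePred (· ∈ S)] :
    ∑ i ∈ S, d i ≫ Sigma.ι f i = ∑ i ∈ T, (if i ∈ S then d i else 0) ≫ Sigma.ι f i := by
  rw [← Finset.sum_subset hST (fun i _ hi => by rw [if_neg hi, zero_comp])]
  exact Finset.sum_congr rfl (fun i hi => by rw [if_pos hi])

private lemma Phi_apply_support {ι : Type v} [DecidableEq ι] (f : ι → C)
    (D : Π₀ i : ι, (s ⟶ f i)) [∀ (i : ι) (x : s ⟶ f i), Decidable (x ≠ 0)] :
    Phi f s D = ∑ i ∈ D.support, D i ≫ Sigma.ι f i := by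
  rw [Phi, DFinsupp.sumAddHom_apply]
  simp [DFinsupp.sum]

private lemma Phi_mk {ι : Type v} [DecidableEq ι] (f : ι → C) (S : Finset ι)
    (d : ∀ i, s ⟶ f i) :
    Phi f s (DFinsupp.mk S (fun i => d i)) = ∑ i ∈ S, d i ≫ Sigma.ι f i := by
  classical
  set D0 : Π₀ i : ι, (s ⟶ f i) := DFinsupp.mk S (fun i => d i) with hD0
  have hsub : D0.support ⊆ S := DFinsupp.support_mk_subset
  rw [Phi_apply_support]
  have h1 : ∀ i ∈ S, i ∉ D0.support → D0 i ≫ Sigma.ι f i = 0 := fun i _ hi => by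
    rw [DFinsupp.notMem_support_iff.1 hi, zero_comp]
  rw [Finset.sum_subset hsub h1]
  refine Finset.sum_congr rfl (fun i hi => ?_)
  rw [hD0, DFinsupp.mk_apply, dif_pos hi]

lemma IsCompactObj.eq_zero (hs : IsCompactObj C s) {ι : Type v} {f : ι → C} {S : Finset ι}
    {d : ∀ i, s ⟶ f i} (hd : ∑ i ∈ S, d i ≫ Sigma.ι f i = 0) : ∀ i ∈ S, d i = 0 := by
  classical
  intro i hi
  rw [isCompactObj_iff] at hs
  have h0 : DFinsupp.mk S (fun i => d i) = 0 :=
    (hs ι f).1 (by rw [Phi_mk, hd, map_zero])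
  have := DFunLike.congr_fun h0 i
  rwa [DFinsupp.mk_apply, dif_pos hi, DFinsupp.zero_apply] at this

lemma IsCompactObj.exists_factor (hs : IsCompactObj C s) {ι : Type v} {f : ι → C}
    (g : s ⟶ ∐ f) : ∃ (S : Finset ι) (d : ∀ i, s ⟶ f i), g = ∑ i ∈ S, d i ≫ Sigma.ι f i := by
  classical
  rw [isCompactObj_iff] at hs
  obtain ⟨D, hD⟩ := (hs ι f).2 g
  exact ⟨D.support, fun i => D i, by rw [← hD, Phi_apply_support]⟩

lemma isCompactObj_mk
    (hinj : ∀ (ι : Type v) (f : ι → C) (S : Finset ι) (d : ∀ i, s ⟶ f i),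
      ∑ i ∈ S, d i ≫ Sigma.ι f i = 0 → ∀ i ∈ S, d i = 0)
    (hsurj : ∀ (ι : Type v) (f : ι → C) (g : s ⟶ ∐ f),
      ∃ (S : Finset ι) (d : ∀ i, s ⟶ f i), g = ∑ i ∈ S, d i ≫ Sigma.ι f i) :
    IsCompactObj C s := by
  rw [isCompactObj_iff]
  intro ι _ f
  classical
  constructor
  · intro D D' hDD'
    have key : ∀ (E : Π₀ i : ι, (s ⟶ f i)), Phi f s E = 0 → E = 0 := by
      intro E hE
      rw [Phi_apply_support] at hE
      ext i
      by_cases hi : i ∈ E.support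
      · exact hinj ι f E.support (fun i => E i) hE i hi
      · simpa using DFinsupp.notMem_support_iff.1 hi
    rw [← sub_eq_zero]
    exact key _ (by rw [map_sub, hDD', sub_self])
  · intro g
    obtain ⟨S, d, hd⟩ := hsurj ι f g
    exact ⟨DFinsupp.mk S (fun i => d i), by rw [Phi_mk, hd]⟩

lemma IsCompactObj.of_iso (e : s ≅ t) (hs : IsCompactObj C s) : IsCompactObj C t := by
  apply isCompactObj_mk
  · intro ι f S d hd i hi
    have h2 : ∀ i ∈ S, e.hom ≫ d i = 0 := by
      apply hs.eq_zero
      simp only [Category.assoc, ← Preadditive.comp_sum, hd, comp_zero]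
    have h3 := h2 i hi
    rw [← Category.id_comp (d i), ← e.inv_hom_id, Category.assoc, h3, comp_zero]
  · intro ι f g
    obtain ⟨S, d, hd⟩ := hs.exists_factor (e.hom ≫ g)
    refine ⟨S, fun i => e.inv ≫ d i, ?_⟩
    calc g = e.inv ≫ (e.hom ≫ g) := by rw [Iso.inv_hom_id_assoc]
    _ = ∑ i ∈ S, (e.inv ≫ d i) ≫ Sigma.ι f i := by
        rw [hd, Preadditive.comp_sum]
        simp only [Category.assoc]

end Compact


section Closure

variable {s t : C}

lemma IsCompactObj.shift (hs : IsCompactObj C s) (k : ℤ) : IsCompactObj C (s⟦k⟧) := by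
  have adj : shiftFunctor C k ⊣ shiftFunctor C (-k) := (shiftEquiv C k).toAdjunction
  haveI : PreservesColimitsOfSize.{v, v} (shiftFunctor C (-k)) :=
    (shiftEquiv C (-k)).toAdjunction.leftAdjoint_preservesColimits
  set G := shiftFunctor C (-k) with hG
  have Eadd : ∀ {t : C} (a b : s⟦k⟧ ⟶ t),
      adj.homEquiv s t (a + b) = adj.homEquiv s t a + adj.homEquiv s t b := by
    intro t a b
    simp [Adjunction.homEquiv_unit, Functor.map_add, Preadditive.comp_add]
  have Fadd : ∀ {t : C} (a b : s ⟶ G.obj t),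
      (adj.homEquiv s t).symm (a + b) = (adj.homEquiv s t).symm a + (adj.homEquiv s t).symm b := by
    intro t a b
    simp [Adjunction.homEquiv_counit, Functor.map_add, Preadditive.add_comp]
  apply isCompactObj_mk
  · intro ι f S d hd i hi
    classical
    set sc := sigmaComparison G f with hsc
    let E : (s⟦k⟧ ⟶ ∐ f) →+ (s ⟶ G.obj (∐ f)) :=
      AddMonoidHom.mk' (fun a => adj.homEquiv s (∐ f) a) Eadd
    have h1 : E (∑ i ∈ S, d i ≫ Sigma.ι f i) = 0 := by rw [hd, map_zero]
    rw [map_sum] at h1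
    have h2 : ∀ i ∈ S, E (d i ≫ Sigma.ι f i)
        = (adj.homEquiv s (f i) (d i) ≫ Sigma.ι (fun i => G.obj (f i)) i) ≫ sc := by
      intro i _
      show adj.homEquiv s (∐ f) (d i ≫ Sigma.ι f i) = _
      rw [adj.homEquiv_naturality_right, Category.assoc, hsc, ι_comp_sigmaComparison]
    rw [Finset.sum_congr rfl h2, ← Preadditive.sum_comp] at h1
    have h3 : (∑ i ∈ S, adj.homEquiv s (f i) (d i) ≫ Sigma.ι (fun i => G.obj (f i)) i) = 0 := by
      haveI : IsIso sc := by infer_instance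
      rw [← cancel_mono sc, zero_comp]
      exact h1
    have h4 := hs.eq_zero h3 i hi
    apply (adj.homEquiv s (f i)).injective
    rw [h4]
    show _ = adj.homEquiv s (f i) 0
    have : adj.homEquiv s (f i) 0 = 0 := by
      simp [Adjunction.homEquiv_unit]
    rw [this]
  · intro ι f g
    classical
    set sc := sigmaComparison G f with hsc
    haveI : IsIso sc := by infer_instance
    obtain ⟨S, d, hd⟩ := hs.exists_factor (adj.homEquiv s (∐ f) g ≫ inv sc)
    have h5 : adj.homEquiv s (∐ f) g = ∑ i ∈ S, d i ≫ G.map (Sigma.ι f i) := by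
      have h5' := congrArg (fun x => x ≫ sc) hd
      rw [Category.assoc, IsIso.inv_hom_id, Category.comp_id] at h5'
      rw [h5', Preadditive.sum_comp]
      refine Finset.sum_congr rfl fun i _ => ?_
      rw [Category.assoc, ι_comp_sigmaComparison]
    refine ⟨S, fun i => (adj.homEquiv s (f i)).symm (d i), ?_⟩
    let F : (s ⟶ G.obj (∐ f)) →+ (s⟦k⟧ ⟶ ∐ f) :=
      AddMonoidHom.mk' (fun a => (adj.homEquiv s (∐ f)).symm a) Fadd
    have h6 : g = F (adj.homEquiv s (∐ f) g) := by
      show g = (adj.homEquiv s (∐ f)).symm (adj.homEquiv s (∐ f) g)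
      rw [Equiv.symm_apply_apply]
    rw [h6, h5, map_sum]
    refine Finset.sum_congr rfl (fun i _ => ?_)
    show (adj.homEquiv s (∐ f)).symm (d i ≫ G.map (Sigma.ι f i)) = _
    rw [Adjunction.homEquiv_naturality_right_symm]

lemma isCompactObj_coproduct {κ : Type v} [Finite κ] {g : κ → C}
    (hg : ∀ j, IsCompactObj C (g j)) : IsCompactObj C (∐ g) := by
  cases nonempty_fintype κ
  classical
  apply isCompactObj_mk
  · intro ι f S d hd i hi
    have key : ∀ j : κ, Sigma.ι g j ≫ d i = 0 := by
      intro j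
      refine (hg j).eq_zero (S := S) (d := fun i => Sigma.ι g j ≫ d i) ?_ i hi
      simp only [Category.assoc, ← Preadditive.comp_sum, hd, comp_zero]
    apply colimit.hom_ext
    rintro ⟨j⟩
    simpa using key j
  · intro ι f φ
    choose Sj Dj hDj using fun j : κ => (hg j).exists_factor (Sigma.ι g j ≫ φ)
    refine ⟨Finset.univ.biUnion Sj, fun i => Sigma.desc (fun j => if i ∈ Sj j then Dj j i else 0),
      ?_⟩
    apply colimit.hom_ext
    rintro ⟨j⟩
    have h1 : ∀ i, (Sigma.ι g j : g j ⟶ ∐ g) ≫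
        (Sigma.desc fun j => if i ∈ Sj j then Dj j i else 0) ≫ Sigma.ι f i
        = (if i ∈ Sj j then Dj j i else 0) ≫ Sigma.ι f i := by
      intro i
      rw [← Category.assoc]
      congr 1
      simp
    show Sigma.ι g j ≫ φ = Sigma.ι g j ≫ _
    rw [Preadditive.comp_sum]
    simp only [← Category.assoc]
    calc Sigma.ι g j ≫ φ = ∑ i ∈ Sj j, Dj j i ≫ Sigma.ι f i := hDj j
    _ = ∑ i ∈ Finset.univ.biUnion Sj, (if i ∈ Sj j then Dj j i else 0) ≫ Sigma.ι f i := by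
        refine sum_comp_ι_subset f (fun i hi => ?_) _
        exact Finset.mem_biUnion.2 ⟨j, Finset.mem_univ j, hi⟩
    _ = _ := by
        refine Finset.sum_congr rfl fun i _ => ?_
        rw [← h1 i, ← Category.assoc]

lemma isCompactObj₂ (T : Triangle C) (hT : T ∈ distTriang C)
    (h₁ : IsCompactObj C T.obj₁) (h₃ : IsCompactObj C T.obj₃) :
    IsCompactObj C T.obj₂ := by
  classical
  have h₁' : IsCompactObj C (T.obj₁⟦(1 : ℤ)⟧) := h₁.shift 1
  have h₃' : IsCompactObj C (T.obj₃⟦(-1 : ℤ)⟧) := h₃.shift (-1)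
  have hiT := inv_rot_of_distTriang T hT
  have hiT₂ : T.invRotate.mor₂ = T.mor₁ := rfl
  have hiT₁ : IsCompactObj C T.invRotate.obj₁ := h₃'
  apply isCompactObj_mk
  · -- injectivity
    intro ι f S e he i₀ hi₀
    have h1 : ∀ i ∈ S, T.mor₁ ≫ e i = 0 := by
      refine h₁.eq_zero (S := S) (d := fun i => T.mor₁ ≫ e i) ?_
      simp only [Category.assoc, ← Preadditive.comp_sum, he, comp_zero]
    have h2 : ∀ i ∈ S, ∃ u, e i = T.mor₂ ≫ u :=
      fun i hi => T.yoneda_exact₂ hT (e i) (h1 i hi)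
    set U : ∀ i, T.obj₃ ⟶ f i := fun i => if h : i ∈ S then (h2 i h).choose else 0 with hU
    have hU' : ∀ i ∈ S, e i = T.mor₂ ≫ U i := by
      intro i hi
      rw [hU]
      simp only [dif_pos hi]
      exact (h2 i hi).choose_spec
    have h3 : T.mor₂ ≫ (∑ i ∈ S, U i ≫ Sigma.ι f i) = 0 := by
      rw [Preadditive.comp_sum, ← he]
      refine Finset.sum_congr rfl fun i hi => ?_
      rw [← Category.assoc, ← hU' i hi]
    obtain ⟨σ, hσ⟩ := T.yoneda_exact₃ hT _ h3
    obtain ⟨S', v, hv⟩ := h₁'.exists_factor σ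
    set W : ∀ i, T.obj₃ ⟶ f i :=
      fun i => (if i ∈ S then U i else 0) - (if i ∈ S' then T.mor₃ ≫ v i else 0) with hW
    have h4 : ∑ i ∈ S ∪ S', W i ≫ Sigma.ι f i = 0 := by
      simp only [hW, Preadditive.sub_comp, Finset.sum_sub_distrib]
      rw [← sum_comp_ι_subset f Finset.subset_union_left,
        ← sum_comp_ι_subset f Finset.subset_union_right, hσ, hv, Preadditive.comp_sum]
      simp only [Category.assoc, sub_self]
    have h5 := h₃.eq_zero h4
    have h6 : U i₀ = if i₀ ∈ S' then T.mor₃ ≫ v i₀ else 0 := by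
      have := h5 i₀ (Finset.mem_union_left _ hi₀)
      rw [hW] at this
      simp only [if_pos hi₀] at this
      rwa [sub_eq_zero] at this
    rw [hU' i₀ hi₀, h6]
    split
    · rw [comp_distTriang_mor_zero₂₃_assoc T hT, zero_comp]
    · rw [comp_zero]
  · -- surjectivity
    intro ι f φ
    obtain ⟨Sa, da, hda⟩ := h₁.exists_factor (T.mor₁ ≫ φ)
    have h1 : ∀ i ∈ Sa, T.invRotate.mor₁ ≫ da i = 0 := by
      refine hiT₁.eq_zero (S := Sa) (d := fun i => T.invRotate.mor₁ ≫ da i) ?_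
      have h0 : T.invRotate.mor₁ ≫ T.invRotate.mor₂ ≫ φ = 0 :=
        (Category.assoc _ _ _).symm.trans
          ((congrArg (fun x => x ≫ φ) (comp_distTriang_mor_zero₁₂ _ hiT)).trans zero_comp)
      have h00 : T.invRotate.mor₁ ≫ ∑ i ∈ Sa, da i ≫ Sigma.ι f i = 0 :=
        (congrArg (fun x => T.invRotate.mor₁ ≫ x) hda).symm.trans h0
      exact (Finset.sum_congr rfl fun i _ => Category.assoc _ _ _).trans
        ((Preadditive.comp_sum _ _ _).symm.trans h00)
    have h2 : ∀ i ∈ Sa, ∃ e, da i = T.mor₁ ≫ e := by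
      intro i hi
      obtain ⟨e, he⟩ := Triangle.yoneda_exact₂ _ hiT (da i) (h1 i hi)
      exact ⟨e, he⟩
    set E : ∀ i, T.obj₂ ⟶ f i := fun i => if h : i ∈ Sa then (h2 i h).choose else 0 with hE
    have hE' : ∀ i ∈ Sa, da i = T.mor₁ ≫ E i := by
      intro i hi
      rw [hE]
      simp only [dif_pos hi]
      exact (h2 i hi).choose_spec
    have h3 : T.mor₁ ≫ (φ - ∑ i ∈ Sa, E i ≫ Sigma.ι f i) = 0 := by
      rw [Preadditive.comp_sub, Preadditive.comp_sum, hda, sub_eq_zero]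
      refine Finset.sum_congr rfl fun i hi => ?_
      rw [← Category.assoc, ← hE' i hi]
    obtain ⟨ρ, hρ⟩ := T.yoneda_exact₂ hT _ h3
    obtain ⟨Sc, dc, hdc⟩ := h₃.exists_factor ρ
    refine ⟨Sa ∪ Sc, fun i =>
      (if i ∈ Sa then E i else 0) + (if i ∈ Sc then T.mor₂ ≫ dc i else 0), ?_⟩
    simp only [Preadditive.add_comp, Finset.sum_add_distrib]
    rw [← sum_comp_ι_subset f Finset.subset_union_left,
      ← sum_comp_ι_subset f Finset.subset_union_right]
    have h7 : ∑ i ∈ Sc, (T.mor₂ ≫ dc i) ≫ Sigma.ι f i = T.mor₂ ≫ ρ := by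
      rw [hdc, Preadditive.comp_sum]
      simp only [Category.assoc]
    rw [h7, ← hρ]
    abel

lemma isCompactObj_biprod {X Y : C} (hX : IsCompactObj C X) (hY : IsCompactObj C Y) :
    IsCompactObj C (X ⊞ Y) :=
  isCompactObj₂ _ (binaryBiproductTriangle_distinguished X Y) hX hY

end Closure

section BiprodTriangle

noncomputable def biprodIsoPi (F : Bool → C) : (F true ⊞ F false) ≅ ∏ᶜ F where
  hom := Pi.lift (fun b => Bool.rec (motive := fun b => F true ⊞ F false ⟶ F b)
    biprod.snd biprod.fst b)
  inv := biprod.lift (Pi.π F true) (Pi.π F false)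
  hom_inv_id := by
    apply biprod.hom_ext <;> simp
  inv_hom_id := by
    apply Limits.Pi.hom_ext
    rintro (_|_) <;> simp

lemma biprodIsoPi_aux₁ (F G : Bool → C) (φ : ∀ b, F b ⟶ G b) :
    biprod.map (φ true) (φ false) ≫ (biprodIsoPi G).hom = (biprodIsoPi F).hom ≫ Limits.Pi.map φ := by
  apply Limits.Pi.hom_ext
  rintro (_|_) <;> simp [biprodIsoPi]

lemma biprodIsoPi_aux₂ (F G : Bool → C) (φ : ∀ b, F b ⟶ G b) (hG : IsZero (G false)) :
    (biprod.fst ≫ φ true) ≫ Pi.lift (fun b => Bool.rec (motive := fun b => G true ⟶ G b) 0 (𝟙 _) b)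
      = (biprodIsoPi F).hom ≫ Limits.Pi.map φ := by
  apply Limits.Pi.hom_ext
  rintro (_|_)
  · exact hG.eq_of_tgt _ _
  · simp [biprodIsoPi]

lemma biprodIsoPi_aux₃ (F G : Bool → C) (φ : ∀ b, G b ⟶ (F b)⟦(1 : ℤ)⟧) :
    (φ true ≫ (biprod.inl : F true ⟶ F true ⊞ F false)⟦(1 : ℤ)⟧') ≫ (biprodIsoPi F).hom⟦(1 : ℤ)⟧'
      = Pi.lift (fun b => Bool.rec (motive := fun b => G true ⟶ G b) 0 (𝟙 _) b) ≫
        Limits.Pi.map φ ≫ inv (piComparison (shiftFunctor C (1 : ℤ)) F) := by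
  rw [← Category.assoc (Pi.lift _), IsIso.eq_comp_inv, Category.assoc, Category.assoc]
  apply Limits.Pi.hom_ext
  rintro (_|_)
  · simp only [Category.assoc, piComparison_comp_π, ← Functor.map_comp]
    simp [biprodIsoPi]
  · simp only [Category.assoc, piComparison_comp_π, ← Functor.map_comp]
    simp [biprodIsoPi]

lemma biprod_triangle_distinguished (T : Triangle C) (hT : T ∈ distTriang C) (u : C) :
    Triangle.mk (biprod.map T.mor₁ (𝟙 u)) (biprod.fst ≫ T.mor₂)
      (T.mor₃ ≫ (biprod.inl : T.obj₁ ⟶ T.obj₁ ⊞ u)⟦(1 : ℤ)⟧') ∈ distTriang C := by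
  let Tb : Bool → Triangle C := fun b => bif b then T else contractibleTriangle u
  have hTb : ∀ b, Tb b ∈ distTriang C := by
    rintro (_|_)
    · exact contractible_distinguished u
    · exact hT
  have hP := productTriangle_distinguished Tb hTb
  refine isomorphic_distinguished _ hP _ ?_
  refine Triangle.isoMk _ _
    (biprodIsoPi (fun b => (Tb b).obj₁))
    (biprodIsoPi (fun b => (Tb b).obj₂))
    (Iso.mk (X := T.obj₃) (Y := ∏ᶜ fun b => (Tb b).obj₃) (Pi.lift (fun b => Bool.rec (motive := fun b => T.obj₃ ⟶ (Tb b).obj₃) 0 (𝟙 _) b))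
      (Pi.π _ true)
      (by simp)
      (by
        apply Limits.Pi.hom_ext
        rintro (_|_)
        · exact (isZero_zero C).eq_of_tgt _ _
        · simp)) ?_ ?_ ?_
  · exact biprodIsoPi_aux₁ (fun b => (Tb b).obj₁) (fun b => (Tb b).obj₂) (fun b => (Tb b).mor₁)
  · exact biprodIsoPi_aux₂ (fun b => (Tb b).obj₂) (fun b => (Tb b).obj₃) (fun b => (Tb b).mor₂)
      (isZero_zero C)
  · exact biprodIsoPi_aux₃ (fun b => (Tb b).obj₁) (fun b => (Tb b).obj₃) (fun b => (Tb b).mor₃)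

end BiprodTriangle



variable {B : Set C}

lemma mem_addCl_of_iso {x y : C} (e : x ≅ y) (hy : y ∈ addCl C B) :
    x ∈ addCl C B := by
  obtain ⟨ι, _, f, c, hf, hc, ⟨e'⟩⟩ := hy
  exact ⟨ι, ‹_›, f, c, hf, hc, ⟨e.trans e'⟩⟩

lemma mem_addCl_of_cofan {κ : Type v} [Finite κ] {g : κ → C}
    (hg : ∀ i, g i ∈ B) : (∐ g) ∈ addCl C B := by
  have e : Fin (Nat.card κ) ≃ κ := (Finite.equivFin κ).symm
  exact ⟨Fin (Nat.card κ), inferInstance, g ∘ e, colimit.cocone _, fun i => hg _,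
    ⟨colimit.isColimit _⟩, ⟨(Sigma.reindex e g).symm⟩⟩

lemma biprod_mem_addCl {u₀ u₁ : C} (h₀ : u₀ ∈ addCl C B)
    (h₁ : u₁ ∈ addCl C B) : (u₀ ⊞ u₁) ∈ addCl C B := by
  obtain ⟨ι₀, _, f₀, c₀, hf₀, ⟨hc₀⟩, ⟨e₀⟩⟩ := h₀
  obtain ⟨ι₁, _, f₁, c₁, hf₁, ⟨hc₁⟩, ⟨e₁⟩⟩ := h₁
  refine ⟨ι₀ ⊕ ι₁, inferInstance, Sum.rec (motive := fun _ => C) f₀ f₁,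
    Cofan.mk (u₀ ⊞ u₁) (fun i => Sum.rec (motive := fun i => Sum.rec (motive := fun _ => C) f₀ f₁ i ⟶ u₀ ⊞ u₁)
      (fun i => c₀.inj i ≫ e₀.inv ≫ biprod.inl)
      (fun i => c₁.inj i ≫ e₁.inv ≫ biprod.inr) i), ?_, ⟨?_⟩, ⟨Iso.refl _⟩⟩
  · rintro (i|i)
    exacts [hf₀ i, hf₁ i]
  · refine mkCofanColimit _
      (fun t => biprod.desc (e₀.hom ≫ Cofan.IsColimit.desc hc₀ (fun i => t.inj (Sum.inl i)))
        (e₁.hom ≫ Cofan.IsColimit.desc hc₁ (fun i => t.inj (Sum.inr i)))) ?_ ?_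
    · rintro t (i|i) <;>
        · simp only [Cofan.inj, Cofan.mk_ι_app, Category.assoc, biprod.inl_desc, biprod.inr_desc,
            Iso.inv_hom_id_assoc]
          exact Cofan.IsColimit.fac _ _ _
    · intro t m hm
      apply biprod.hom_ext'
      · rw [biprod.inl_desc, ← Iso.inv_comp_eq]
        refine Cofan.IsColimit.hom_ext hc₀ _ _ (fun i => ?_)
        rw [Cofan.IsColimit.fac]
        simpa [Cofan.inj] using hm (Sum.inl i)
      · rw [biprod.inr_desc, ← Iso.inv_comp_eq]
        refine Cofan.IsColimit.hom_ext hc₁ _ _ (fun i => ?_)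
        rw [Cofan.IsColimit.fac]
        simpa [Cofan.inj] using hm (Sum.inr i)


section SubCop

variable {ι : Type v} (f : ι → C) (S : Finset ι)

noncomputable def subIncl : (∐ fun i : S => f i) ⟶ ∐ f := Sigma.desc fun i => Sigma.ι f i

noncomputable def subRetr : (∐ f) ⟶ (∐ fun i : S => f i) := by
  classical
  exact Sigma.desc fun i => if h : i ∈ S then Sigma.ι (fun i : S => f i) ⟨i, h⟩ else 0

lemma subIncl_subRetr : subIncl f S ≫ subRetr f S = 𝟙 _ := by
  classical
  apply colimit.hom_ext
  rintro ⟨i⟩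
  simp [subIncl, subRetr, dif_pos i.2]

lemma sum_factor_subIncl {s : C} (d : ∀ i, s ⟶ f i) :
    ∑ i ∈ S, d i ≫ Sigma.ι f i
      = (∑ i ∈ S.attach, d i.1 ≫ Sigma.ι (fun i : S => f i) i) ≫ subIncl f S := by
  rw [Preadditive.sum_comp, ← Finset.sum_attach S (fun i => d i ≫ Sigma.ι f i)]
  refine Finset.sum_congr rfl fun i _ => ?_
  rw [Category.assoc]
  congr 1
  simp [subIncl]

lemma subCop_mem_addCl {B : Set C} (hf : ∀ i ∈ S, f i ∈ B) :
    (∐ fun i : S => f i) ∈ addCl C B :=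
  mem_addCl_of_cofan (fun i => hf i i.2)

lemma subCop_isCompact (hf : ∀ i ∈ S, IsCompactObj C (f i)) :
    IsCompactObj C (∐ fun i : S => f i) :=
  isCompactObj_coproduct (fun i => hf i i.2)

end SubCop

lemma factor_lemma (B : Set C) (hB : ∀ b ∈ B, IsCompactObj C b) :
    ∀ (n : ℕ) (s : C), IsCompactObj C s → ∀ (y : C) (g : s ⟶ y),
      y ∈ CoprodN.{v} C B n →
      ∃ c, c ∈ COprodN C B n ∧ IsCompactObj C c ∧ ∃ (α : s ⟶ c) (β : c ⟶ y), α ≫ β = g := by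
  intro n
  induction n with
  | zero => intro s _ y g hy; exact hy.elim
  | succ n ih =>
    cases n with
    | zero =>
      intro s hs y g hy
      obtain ⟨κ, b, cf, hb, ⟨hcolim⟩, ⟨e⟩⟩ := hy
      have e' : y ≅ ∐ b := e.trans (hcolim.coconePointUniqueUpToIso (colimit.isColimit _))
      obtain ⟨S, d, hd⟩ := hs.exists_factor (g ≫ e'.hom)
      refine ⟨∐ fun i : S => b i, subCop_mem_addCl b S (fun i _ => hb i),
        subCop_isCompact b S (fun i _ => hB (b i) (hb i)),
        ∑ i ∈ S.attach, d i.1 ≫ Sigma.ι (fun i : S => b i) i, subIncl b S ≫ e'.inv, ?_⟩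
      rw [← Category.assoc, ← sum_factor_subIncl, ← hd, Category.assoc, e'.hom_inv_id,
        Category.comp_id]
    | succ m =>
      intro s hs y g hy
      obtain ⟨u, z, fm, p, wm, hu, hz, hTd⟩ := hy
      set T : Triangle C := Triangle.mk fm p wm with hTdef
      obtain ⟨c, hcmem, hcc, α, β, hαβ⟩ := ih s hs z (g ≫ p) hz
      obtain ⟨κ, b, cf, hb, ⟨hcolim⟩, ⟨e⟩⟩ := hu
      have e' : u ≅ ∐ b := e.trans (hcolim.coconePointUniqueUpToIso (colimit.isColimit _))
      haveI : PreservesColimitsOfSize.{v, v} (shiftFunctor C (1 : ℤ)) :=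
        (shiftEquiv C (1 : ℤ)).toAdjunction.leftAdjoint_preservesColimits
      have hsciso : IsIso (sigmaComparison (shiftFunctor C (1 : ℤ)) b) := inferInstance
      obtain ⟨S, d, hd⟩ := hcc.exists_factor
        (β ≫ wm ≫ e'.hom⟦(1 : ℤ)⟧' ≫ inv (sigmaComparison (shiftFunctor C (1 : ℤ)) b))
      set γ : c ⟶ (∐ fun i : S => b i)⟦(1 : ℤ)⟧ :=
        ∑ i ∈ S.attach, d i.1 ≫ (Sigma.ι (fun i : S => b i) i)⟦(1 : ℤ)⟧' with hγdef
      have hγj : γ ≫ (subIncl b S)⟦(1 : ℤ)⟧' = β ≫ wm ≫ e'.hom⟦(1 : ℤ)⟧' := by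
        have h1 : β ≫ wm ≫ e'.hom⟦(1 : ℤ)⟧'
            = ∑ i ∈ S, d i ≫ (shiftFunctor C (1 : ℤ)).map (Sigma.ι b i) := by
          have h0 := congrArg (fun x => x ≫ sigmaComparison (shiftFunctor C (1 : ℤ)) b) hd
          simp only [Category.assoc, IsIso.inv_hom_id, Category.comp_id] at h0
          rw [h0, Preadditive.sum_comp]
          exact Finset.sum_congr rfl fun i _ => by rw [Category.assoc, ι_comp_sigmaComparison]
        rw [h1, hγdef, Preadditive.sum_comp,
          ← Finset.sum_attach S (fun i => d i ≫ (shiftFunctor C (1 : ℤ)).map (Sigma.ι b i))]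
        refine Finset.sum_congr rfl fun i _ => ?_
        rw [Category.assoc, ← Functor.map_comp]
        congr 2
        simp [subIncl]
      set J : (∐ fun i : S => b i) ⟶ u := subIncl b S ≫ e'.inv with hJdef
      have hJR : J ≫ (e'.hom ≫ subRetr b S) = 𝟙 _ := by
        rw [hJdef, Category.assoc, Iso.inv_hom_id_assoc, subIncl_subRetr]
      have hγJ : γ ≫ J⟦(1 : ℤ)⟧' = β ≫ wm := by
        rw [hJdef, Functor.map_comp, ← Category.assoc, hγj, Category.assoc, Category.assoc,
          ← Functor.map_comp, e'.hom_inv_id, CategoryTheory.Functor.map_id, Category.comp_id]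
      obtain ⟨y', f', p', hT'⟩ := distinguished_cocone_triangle₂ γ
      set T' : Triangle C := Triangle.mk f' p' γ with hT'def
      have hαγ : α ≫ γ = 0 := by
        have h1 : (α ≫ γ) ≫ J⟦(1 : ℤ)⟧' = 0 := by
          rw [Category.assoc, hγJ, ← Category.assoc, hαβ, Category.assoc]
          have : p ≫ wm = 0 := comp_distTriang_mor_zero₂₃ T hTd
          rw [this, comp_zero]
        calc α ≫ γ = ((α ≫ γ) ≫ J⟦(1 : ℤ)⟧') ≫ (e'.hom ≫ subRetr b S)⟦(1 : ℤ)⟧' := by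
              rw [Category.assoc, ← Functor.map_comp, hJR, CategoryTheory.Functor.map_id, Category.comp_id]
          _ = 0 := by rw [h1, zero_comp]
      obtain ⟨δ, hδ⟩ : ∃ δ : s ⟶ y', α = δ ≫ p' := Triangle.coyoneda_exact₃ T' hT' α hαγ
      obtain ⟨η, hη₁, hη₂⟩ : ∃ η : y' ⟶ y, f' ≫ η = J ≫ fm ∧ p' ≫ β = η ≫ p :=
        complete_distinguished_triangle_morphism₂ T' T hT' hTd J β hγJ
      have h2 : (g - (δ ≫ η : s ⟶ y)) ≫ p = 0 := by
        have h3 : δ ≫ η ≫ p = g ≫ p := by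
          rw [← hη₂, ← Category.assoc, ← hδ, hαβ]
        rw [Preadditive.sub_comp, Category.assoc, h3, sub_self]
      obtain ⟨ε, hε⟩ : ∃ ε : s ⟶ u, g - (δ ≫ η : s ⟶ y) = ε ≫ fm :=
        Triangle.coyoneda_exact₂ T hTd (g - (δ ≫ η : s ⟶ y)) h2
      obtain ⟨S₁, d₁, hd₁⟩ := hs.exists_factor (ε ≫ e'.hom)
      set ε₀ : s ⟶ (∐ fun i : S₁ => b i) :=
        ∑ i ∈ S₁.attach, d₁ i.1 ≫ Sigma.ι (fun i : S₁ => b i) i with hε₀def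
      set J₁ : (∐ fun i : S₁ => b i) ⟶ u := subIncl b S₁ ≫ e'.inv with hJ₁def
      have hε' : ε = ε₀ ≫ J₁ := by
        have h4 : ε ≫ e'.hom = ε₀ ≫ subIncl b S₁ := by
          rw [hd₁, hε₀def]
          exact sum_factor_subIncl b S₁ d₁
        calc ε = (ε ≫ e'.hom) ≫ e'.inv := by simp
        _ = ε₀ ≫ J₁ := by rw [h4, hJ₁def, Category.assoc]
      have hTsum := biprod_triangle_distinguished T' hT' (∐ fun i : S₁ => b i)
      refine ⟨y' ⊞ (∐ fun i : S₁ => b i), ?_, ?_, biprod.lift δ ε₀,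
        biprod.desc η (J₁ ≫ fm), ?_⟩
      · exact ⟨(∐ fun i : S => b i) ⊞ (∐ fun i : S₁ => b i), c, biprod.map T'.mor₁ (𝟙 _),
          biprod.fst ≫ T'.mor₂, T'.mor₃ ≫ (biprod.inl)⟦(1 : ℤ)⟧',
          biprod_mem_addCl (subCop_mem_addCl b S (fun i _ => hb i))
            (subCop_mem_addCl b S₁ (fun i _ => hb i)), hcmem, hTsum⟩
      · exact isCompactObj_biprod
          (isCompactObj₂ T' hT' (subCop_isCompact b S (fun i _ => hB (b i) (hb i))) hcc)
          (subCop_isCompact b S₁ (fun i _ => hB (b i) (hb i)))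
      · have hε2 : (ε ≫ fm : s ⟶ y) = g - (δ ≫ η : s ⟶ y) := hε.symm
        rw [biprod.lift_desc, ← Category.assoc, ← hε', hε2]
        abel

end Lemmas

/-- Proposition 1.13(i). Let `C` be a triangulated category with
coproducts and `B` a subcategory of compact objects. Any compact object of
`Coprod_n(B)` is a direct summand of an object of `COprod_n(B)`. -/
theorem stmt4 [HasCoproducts.{v} C] (B : Set C) (hB : ∀ b ∈ B, IsCompactObj C b)
    (n : ℕ) (x : C) (hx : IsCompactObj C x) (hmem : x ∈ CoprodN.{v} C B n) :
    ∃ b ∈ COprodN C B n, ∃ (i : x ⟶ b) (r : b ⟶ x), i ≫ r = 𝟙 x := by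
  obtain ⟨c, hcmem, _, α, β, hαβ⟩ := factor_lemma B hB n x hx x (𝟙 x) hmem
  exact ⟨c, hcmem, α, β, hαβ⟩

end Paper
end

section
/- Let T be a triangulated category with coproducts, let b ∈ T be an object, and let e : b → b be an idempotent endomorphism (e ∘ e = e) which splits, with image x (i.e. there are maps p : b → x, i : x → b with p ∘ i = id_x and i ∘ p = e). Then x is a homotopy colimit of the sequence b → b → b → ⋯ with all maps equal to e; in particular there is a distinguished triangle ∐_{i=0}^∞ b → x → (∐_{i=0}^∞ b)[1]. -/
open CategoryTheory CategoryTheory.Limits CategoryTheory.Pretriangulated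

universe w v u

namespace Paper

variable (C : Type u) [Category.{v} C] [HasZeroObject C] [Preadditive C] [HasShift C ℤ]
  [∀ n : ℤ, (CategoryTheory.shiftFunctor C n).Additive] [Pretriangulated C]

/-!
Write `φ = 1 - e·shift : ∐ b ⟶ ∐ b`. It is a split monomorphism: the map `r` sending the `k`-th
summand to `ι_k - ∑_{j ≤ k} e ≫ ι_j` satisfies `φ ≫ r = 1`, and `r ≫ φ = 1 - ∐ (e ≫ ι_0)` because
the sums telescope. Since `e = p ≫ i`, the complementary idempotent `∐ (e ≫ ι_0)` splits through
`x` via `∐ p` and `i ≫ ι_0`, so `∐ b ≅ ∐ b ⊞ x` with `φ` the first inclusion and `∐ p` the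
second projection. The split triangle `∐ b ⟶ ∐ b ⊞ x ⟶ x` with zero connecting map is
distinguished, which exhibits `x` as the cone of `φ`, i.e. as the homotopy colimit.
-/

section Telescope

variable {D : Type*} [Category D] [Preadditive D] {b : D} [HasCoproduct fun _ : ℕ => b]

noncomputable def telescope (e : b ⟶ b) : (∐ fun _ : ℕ => b) ⟶ ∐ fun _ : ℕ => b :=
  Sigma.desc fun k => Sigma.ι (fun _ : ℕ => b) k - e ≫ Sigma.ι (fun _ : ℕ => b) (k + 1)

noncomputable def telescopeRetraction (e : b ⟶ b) : (∐ fun _ : ℕ => b) ⟶ ∐ fun _ : ℕ => b :=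
  Sigma.desc fun k =>
    Sigma.ι (fun _ : ℕ => b) k - ∑ j ∈ Finset.range (k + 1), e ≫ Sigma.ι (fun _ : ℕ => b) j

@[simp]
lemma ι_telescope (e : b ⟶ b) (k : ℕ) :
    Sigma.ι (fun _ : ℕ => b) k ≫ telescope e =
      Sigma.ι (fun _ : ℕ => b) k - e ≫ Sigma.ι (fun _ : ℕ => b) (k + 1) :=
  Sigma.ι_desc _ k

@[simp]
lemma ι_telescopeRetraction (e : b ⟶ b) (k : ℕ) :
    Sigma.ι (fun _ : ℕ => b) k ≫ telescopeRetraction e =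
      Sigma.ι (fun _ : ℕ => b) k - ∑ j ∈ Finset.range (k + 1), e ≫ Sigma.ι (fun _ : ℕ => b) j :=
  Sigma.ι_desc _ k

lemma telescope_comp_telescopeRetraction {e : b ⟶ b} (he : e ≫ e = e) :
    telescope e ≫ telescopeRetraction e = 𝟙 _ := by
  ext k
  rw [← Category.assoc, ι_telescope]
  simp only [Preadditive.sub_comp, Category.assoc, ι_telescopeRetraction, Preadditive.comp_sub,
    Finset.sum_range_succ _ (k + 1), Preadditive.comp_add, Preadditive.comp_sum, reassoc_of% he,
    Category.comp_id]
  abel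

lemma telescopeRetraction_comp_telescope {e : b ⟶ b} (he : e ≫ e = e) :
    telescopeRetraction e ≫ telescope e =
      𝟙 _ - Limits.Sigma.desc (fun _ : ℕ => e ≫ Sigma.ι (fun _ : ℕ => b) 0) := by
  ext k
  have tele : ∑ j ∈ Finset.range (k + 1),
      e ≫ (Sigma.ι (fun _ : ℕ => b) j - e ≫ Sigma.ι (fun _ : ℕ => b) (j + 1)) =
      e ≫ Sigma.ι (fun _ : ℕ => b) 0 - e ≫ Sigma.ι (fun _ : ℕ => b) (k + 1) := by
    simp only [Preadditive.comp_sub, reassoc_of% he]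
    exact Finset.sum_range_sub' (fun j => e ≫ Sigma.ι (fun _ : ℕ => b) j) (k + 1)
  rw [← Category.assoc, ι_telescopeRetraction, Preadditive.sub_comp, Preadditive.sum_comp]
  simp only [Category.assoc, ι_telescope]
  rw [tele, Preadditive.comp_sub, Category.comp_id, Sigma.ι_desc]
  abel

variable {x : D} (p : b ⟶ x) (i : x ⟶ b)

noncomputable def splitTelescopeBicone (hip : i ≫ p = 𝟙 x) :
    BinaryBicone (∐ fun _ : ℕ => b) x where
  pt := ∐ fun _ : ℕ => b
  fst := telescopeRetraction (p ≫ i)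
  snd := Sigma.desc fun _ => p
  inl := telescope (p ≫ i)
  inr := i ≫ Sigma.ι (fun _ : ℕ => b) 0
  inl_fst := telescope_comp_telescopeRetraction (by simp [reassoc_of% hip])
  inl_snd := by
    ext k
    rw [← Category.assoc, ι_telescope]
    simp [hip]
  inr_fst := by
    rw [Category.assoc, ι_telescopeRetraction]
    simp [reassoc_of% hip]
  inr_snd := by simp [hip]

lemma telescopeRetraction_comp_telescope_add_desc_comp (hip : i ≫ p = 𝟙 x) :
    telescopeRetraction (p ≫ i) ≫ telescope (p ≫ i) +
      (Sigma.desc fun _ => p) ≫ i ≫ Sigma.ι (fun _ : ℕ => b) 0 = 𝟙 _ := by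
  have hdesc : (Sigma.desc fun _ : ℕ => p) ≫ i ≫ Sigma.ι (fun _ : ℕ => b) 0 =
      Limits.Sigma.desc fun _ : ℕ => (p ≫ i) ≫ Sigma.ι (fun _ : ℕ => b) 0 := by
    ext; simp
  rw [telescopeRetraction_comp_telescope (by simp [reassoc_of% hip]), hdesc, sub_add_cancel]

noncomputable def splitTelescopeBiconeIsBilimit (hip : i ≫ p = 𝟙 x) :
    (splitTelescopeBicone p i hip).IsBilimit :=
  isBinaryBilimitOfTotal _ (telescopeRetraction_comp_telescope_add_desc_comp p i hip)

end Telescope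

section Pretriangulated

variable {C}

lemma binaryBicone_triangle_distinguished {X₁ X₂ : C} {c : BinaryBicone X₁ X₂}
    (hc : c.IsBilimit) : Triangle.mk c.inl c.snd (0 : X₂ ⟶ X₁⟦(1 : ℤ)⟧) ∈ distTriang C :=
  isomorphic_distinguished _ (binaryBiproductTriangle_distinguished X₁ X₂) _ <|
    Triangle.isoMk _ _ (Iso.refl X₁) (biprod.uniqueUpToIso X₁ X₂ hc) (Iso.refl X₂)
      (by
        change c.inl ≫ biprod.lift c.fst c.snd = 𝟙 X₁ ≫ biprod.inl
        ext <;> simp)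
      (by
        change c.snd ≫ 𝟙 X₂ = biprod.lift c.fst c.snd ≫ biprod.snd
        simp)
      (by
        change (0 : X₂ ⟶ X₁⟦(1 : ℤ)⟧) ≫ (shiftFunctor C 1).map (𝟙 X₁) = 𝟙 X₂ ≫ 0
        simp)

end Pretriangulated

theorem stmt6 [HasCoproducts.{0} C] (b x : C) (e : b ⟶ b)
    (p : b ⟶ x) (i : x ⟶ b) (hip : i ≫ p = 𝟙 x) (hpi : p ≫ i = e) :
    (∃ (g : (∐ fun _ : ℕ => b) ⟶ x) (h : x ⟶ (∐ fun _ : ℕ => b)⟦(1 : ℤ)⟧),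
      Triangle.mk
        (Sigma.desc fun k : ℕ =>
          Sigma.ι (fun _ : ℕ => b) k - e ≫ Sigma.ι (fun _ : ℕ => b) (k + 1))
        g h ∈ distTriang C) ∧
    (∃ (α : (∐ fun _ : ℕ => b) ⟶ x) (β : x ⟶ (∐ fun _ : ℕ => b)⟦(1 : ℤ)⟧)
      (δ : (∐ fun _ : ℕ => b)⟦(1 : ℤ)⟧ ⟶ (∐ fun _ : ℕ => b)⟦(1 : ℤ)⟧),
      Triangle.mk α β δ ∈ distTriang C) := by
  subst hpi
  have hT := binaryBicone_triangle_distinguished (splitTelescopeBiconeIsBilimit p i hip)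
  exact ⟨⟨_, 0, hT⟩, ⟨_, 0, _, rot_of_distTriang _ hT⟩⟩

end Paper
end
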